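/- For the Newtonian dynamical system ẋ = u, u̇ᵏ = Fᵏ with force field Fₖ = −|u| Σᵢ (∇ᵢW/W')(2NⁱNₖ − δⁱₖ) where N = u/|u| and W = W(x,|u|) is fiberwise spherically symmetric with W' ≠ 0, the function W(x(t), |u(t)|) is a first integral: d/dt W(x(t),|u(t)|) = 0 along every solution with u(t) ≠ 0. -/

import Mathlib

open Set

lemma sum_key {n : ℕ} (r : ℝ) (hr : r ≠ 0) (u a : Fin n → ℝ)
    (hr2 : ∑ k, u k * u k = r * r) :
    ∑ k, u k * (-r * ∑ i, a i * (2 * (u i / r) * (u k / r) - if i = k then (1:ℝ) else 0))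
      = -r * ∑ i, a i * u i := by
  have step1 : ∀ k, u k * (-r * ∑ i, a i * (2 * (u i / r) * (u k / r) - if i = k then (1:ℝ) else 0))
      = ∑ i, ((-2 * a i * u i / r) * (u k * u k) + (r * a i) * (if i = k then u k else 0)) := by
    intro k
    rw [Finset.mul_sum, Finset.mul_sum]
    refine Finset.sum_congr rfl fun i _ => ?_
    by_cases h : i = k
    · simp only [if_pos h]; subst h; field_simp; ring
    · simp only [if_neg h, mul_zero, add_zero]; field_simp; ring
  simp only [step1]
  rw [Finset.sum_comm, Finset.mul_sum]
  refine Finset.sum_congr rfl fun i _ => ?_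
  rw [Finset.sum_add_distrib, ← Finset.mul_sum, ← Finset.mul_sum, hr2,
    Finset.sum_ite_eq, if_pos (Finset.mem_univ i)]
  field_simp
  ring

/-- for the Newtonian system `ẋ = u`,
`u̇ₖ = −|u| Σᵢ (∇ᵢW/W')(2NⁱNₖ − δⁱₖ)` with `N = u/|u|` and fiberwise spherically
symmetric `W = W(x,|u|)`, `W' ≠ 0`, the function `W(x(t),|u(t)|)` is a first
integral: its time derivative vanishes along every solution with `u(t) ≠ 0`. -/
theorem W_is_first_integral
    (n : ℕ) (W : EuclideanSpace ℝ (Fin n) × ℝ → ℝ)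
    (hW : ContDiffOn ℝ (⊤ : ℕ∞) W (univ ×ˢ Ioi (0 : ℝ)))
    (hW' : ∀ (y : EuclideanSpace ℝ (Fin n)) (r : ℝ), 0 < r →
      deriv (fun s => W (y, s)) r ≠ 0)
    (x u : ℝ → EuclideanSpace ℝ (Fin n))
    (hu0 : ∀ t, u t ≠ 0)
    (hx : ∀ t, HasDerivAt x (u t) t)
    (hu : ∀ t k, HasDerivAt (fun s => u s k)
      (-(‖u t‖) * ∑ i : Fin n,
        (fderiv ℝ (fun y => W (y, ‖u t‖)) (x t) (EuclideanSpace.single i 1)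
          / deriv (fun s => W (x t, s)) ‖u t‖)
        * (2 * (u t i / ‖u t‖) * (u t k / ‖u t‖) - if i = k then (1 : ℝ) else 0)) t) :
    ∀ t, HasDerivAt (fun s => W (x s, ‖u s‖)) 0 t := by
  intro t
  have hr : 0 < ‖u t‖ := norm_pos_iff.2 (hu0 t)
  -- total derivative of W at the point
  have hopen : IsOpen ((univ : Set (EuclideanSpace ℝ (Fin n))) ×ˢ Ioi (0:ℝ)) :=
    isOpen_univ.prod isOpen_Ioi
  have hmem : (x t, ‖u t‖) ∈ (univ : Set (EuclideanSpace ℝ (Fin n))) ×ˢ Ioi (0:ℝ) :=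
    ⟨mem_univ _, hr⟩
  have hdiff : DifferentiableAt ℝ W (x t, ‖u t‖) :=
    (hW.contDiffAt (hopen.mem_nhds hmem)).differentiableAt (by simp)
  set D := fderiv ℝ W (x t, ‖u t‖) with hDdef
  have hD : HasFDerivAt W D (x t, ‖u t‖) := hdiff.hasFDerivAt
  -- partial derivatives expressed through D
  have hpart1 : fderiv ℝ (fun y => W (y, ‖u t‖)) (x t)
      = D.comp (ContinuousLinearMap.inl ℝ (EuclideanSpace ℝ (Fin n)) ℝ) :=
    (hD.comp (x t) (hasFDerivAt_prodMk_left (x t) ‖u t‖)).fderiv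
  have hpart2 : deriv (fun s => W (x t, s)) ‖u t‖ = D (0, 1) :=
    (hD.comp_hasDerivAt ‖u t‖ ((hasDerivAt_const ‖u t‖ (x t)).prodMk (hasDerivAt_id ‖u t‖))).deriv
  have hc : D (0, 1) ≠ 0 := hpart2 ▸ hW' (x t) ‖u t‖ hr
  -- the velocity derivative as a vector
  set v0 : Fin n → ℝ := fun k => -(‖u t‖) * ∑ i : Fin n,
      (fderiv ℝ (fun y => W (y, ‖u t‖)) (x t) (EuclideanSpace.single i 1)
        / deriv (fun s => W (x t, s)) ‖u t‖)
      * (2 * (u t i / ‖u t‖) * (u t k / ‖u t‖) - if i = k then (1 : ℝ) else 0) with hv0def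
  set v : EuclideanSpace ℝ (Fin n) := (EuclideanSpace.equiv (Fin n) ℝ).symm v0 with hvdef
  have hf : HasDerivAt (fun s k => u s k) v0 t := hasDerivAt_pi.2 (hu t)
  have hu' : HasDerivAt u v t := by
    have := ((EuclideanSpace.equiv (Fin n) ℝ).symm :
      (Fin n → ℝ) →L[ℝ] EuclideanSpace ℝ (Fin n)).hasFDerivAt.comp_hasDerivAt t hf
    exact this
  -- derivative of the norm
  have hne : (inner ℝ (u t) (u t) : ℝ) ≠ 0 := by
    rw [real_inner_self_eq_norm_mul_norm]; positivity
  have hnorm : HasDerivAt (fun s => ‖u s‖) ((inner ℝ (u t) v : ℝ) / ‖u t‖) t := by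
    have h1 := (hu'.inner ℝ hu').sqrt hne
    have hfun : (fun s => Real.sqrt (inner ℝ (u s) (u s) : ℝ)) = fun s => ‖u s‖ := by
      funext s
      rw [real_inner_self_eq_norm_mul_norm, Real.sqrt_mul_self (norm_nonneg _)]
    rw [hfun] at h1
    convert h1 using 1
    rw [real_inner_self_eq_norm_mul_norm, Real.sqrt_mul_self (norm_nonneg _),
      real_inner_comm v (u t)]
    field_simp
    ring
  -- key algebraic identity for the inner product
  set a : Fin n → ℝ := fun i => D (EuclideanSpace.single i 1, 0) / D (0, 1) with hadef
  have hr2 : ∑ k, u t k * u t k = ‖u t‖ * ‖u t‖ := by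
    rw [← real_inner_self_eq_norm_mul_norm]
    simp [PiLp.inner_apply, RCLike.inner_apply, -real_inner_self_eq_norm_sq]; rw [EuclideanSpace.norm_eq, Real.sq_sqrt (by positivity)]; simp [sq]
  have hv0 : ∀ k, v0 k = -(‖u t‖) * ∑ i : Fin n,
      a i * (2 * (u t i / ‖u t‖) * (u t k / ‖u t‖) - if i = k then (1:ℝ) else 0) := by
    intro k
    simp only [hv0def, hadef, hpart1, hpart2, ContinuousLinearMap.coe_comp',
      Function.comp_apply, ContinuousLinearMap.inl_apply]
  have hinner : (inner ℝ (u t) v : ℝ) = -(‖u t‖) * ∑ i, a i * u t i := by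
    have : (inner ℝ (u t) v : ℝ) = ∑ k, u t k * v0 k := by
      simp [PiLp.inner_apply, RCLike.inner_apply, hvdef]; exact Finset.sum_congr rfl fun _ _ => mul_comm _ _
    rw [this]
    simp only [hv0]
    exact sum_key ‖u t‖ (ne_of_gt hr) (fun k => u t k) a hr2
  -- assemble
  have htot := hD.comp_hasDerivAt t ((hx t).prodMk hnorm)
  have hsingle : (∑ i, u t i • EuclideanSpace.single i (1:ℝ)) = u t := by
    simpa using (EuclideanSpace.basisFun (Fin n) ℝ).sum_repr (u t)
  have hzero : D (u t, (inner ℝ (u t) v : ℝ) / ‖u t‖) = 0 := by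
    have hm : (inner ℝ (u t) v : ℝ) / ‖u t‖ = -∑ i, a i * u t i := by
      rw [hinner]; field_simp
    have hsplit : ((u t, (inner ℝ (u t) v : ℝ) / ‖u t‖) : EuclideanSpace ℝ (Fin n) × ℝ)
        = (u t, 0) + ((inner ℝ (u t) v : ℝ) / ‖u t‖) • ((0, 1) : EuclideanSpace ℝ (Fin n) × ℝ) := by
      simp [Prod.ext_iff]
    have hD1 : D (u t, 0) = ∑ i, u t i * D (EuclideanSpace.single i 1, 0) := by
      have h2 : ((u t, 0) : EuclideanSpace ℝ (Fin n) × ℝ)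
          = ∑ i, (u t i) • ((EuclideanSpace.single i 1, 0) : EuclideanSpace ℝ (Fin n) × ℝ) := by
        rw [Prod.ext_iff]
        constructor
        · rw [Prod.fst_sum]
          simp only [Prod.smul_mk]
          exact hsingle.symm
        · rw [Prod.snd_sum]; simp
      rw [h2, map_sum]
      refine Finset.sum_congr rfl fun i _ => ?_
      rw [map_smul, smul_eq_mul]
    rw [hsplit, map_add, map_smul, smul_eq_mul, hD1, hm]
    rw [neg_mul, Finset.sum_mul]
    have : ∀ i ∈ Finset.univ, a i * u t i * D (0,1) = u t i * D (EuclideanSpace.single i 1, 0) := by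
      intro i _
      rw [hadef]
      field_simp
    rw [Finset.sum_congr rfl this]
    ring
  rw [← hzero]
  exact htot
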